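/- arXiv:1904.02986 — 2 statements merged into one kernel-verified Lean document; each statement's English description precedes it below -/
import Mathlib

section
/- Let m, n, r ∈ ℕ with m ≥ n, let (a_k) be a sequence of complex numbers, and let t ∈ ℝ be such that t ≠ 2lπ/r for every integer l. Then ∑_{k=n}^{m} a_k cos(kt) = ∑_{k=n}^{m} (a_k − a_{k+r}) D°_{k,r}(t) − ∑_{k=m+1}^{m+r} a_k D°_{k,−r}(t) + ∑_{k=n}^{n+r−1} a_k D°_{k,−r}(t). -/
/-!
Since `sin(r t / 2) ≠ 0`, the product-to-sum formula gives `cos(k t) = D°_{k,r}(t) + D°_{k,-r}(t)`,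
and `D°_{k,r} = -D°_{k+r,-r}`. Hence `a_k cos(k t) = (a_k - a_{k+r}) D°_{k,r}(t) + f(k) - f(k+r)` with
`f(k) = a_k D°_{k,-r}(t)`, and the sum of `f(k) - f(k+r)` over `n ≤ k ≤ m` telescopes with step `r`
to the two boundary sums.
-/

open Real Finset

noncomputable section

/-- The kernel `D°_{k,ρ}(t) = sin((2k+ρ)t/2) / (2 sin(ρt/2))`. -/
def Dker (k : ℕ) (ρ : ℤ) (t : ℝ) : ℝ :=
  Real.sin ((2 * (k : ℝ) + (ρ : ℝ)) * t / 2) / (2 * Real.sin ((ρ : ℝ) * t / 2))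

theorem Finset.sum_Ico_sub_shift {M : Type*} [AddCommGroup M] (f : ℕ → M) {n m : ℕ}
    (hnm : n ≤ m) (r : ℕ) :
    ∑ k ∈ Ico n m, (f k - f (k + r))
      = ∑ k ∈ Ico n (n + r), f k - ∑ k ∈ Ico m (m + r), f k := by
  have hleft := sum_Ico_consecutive f hnm (Nat.le_add_right m r)
  have hright := sum_Ico_consecutive f (Nat.le_add_right n r) (Nat.add_le_add_right hnm r)
  rw [sum_sub_distrib, sum_Ico_add' f n m r]
  rw [← hright] at hleft
  linear_combination (norm := abel) hleft

theorem Real.sin_mul_div_two_ne_zero {x t : ℝ} (hx : x ≠ 0)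
    (ht : ∀ l : ℤ, t ≠ 2 * (l : ℝ) * π / x) : Real.sin (x * t / 2) ≠ 0 := by
  rw [Real.sin_ne_zero_iff]
  intro l hl
  exact ht l (by field_simp; linarith)

theorem Dker_add_Dker_neg (k : ℕ) (ρ : ℤ) {t : ℝ} (hρ : Real.sin ((ρ : ℝ) * t / 2) ≠ 0) :
    Dker k ρ t + Dker k (-ρ) t = Real.cos ((k : ℝ) * t) := by
  have hplus : (2 * (k : ℝ) + ρ) * t / 2 = k * t + ρ * t / 2 := by ring
  have hminus : (2 * (k : ℝ) + -ρ) * t / 2 = k * t - ρ * t / 2 := by ring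
  unfold Dker
  rw [Int.cast_neg, hplus, hminus, neg_mul, neg_div, Real.sin_neg, Real.sin_add, Real.sin_sub]
  generalize Real.sin ((ρ : ℝ) * t / 2) = s at hρ ⊢
  field_simp
  ring

theorem Dker_add_neg (k r : ℕ) (t : ℝ) : Dker (k + r) (-(r : ℤ)) t = -Dker k r t := by
  unfold Dker
  push_cast
  rw [show (2 * ((k : ℝ) + r) + -r) * t / 2 = (2 * k + r) * t / 2 by ring,
    neg_mul, neg_div, Real.sin_neg]
  ring

/-- **Lemma 3, cosine part.** Summation-by-parts identity with `r`-differences. -/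
theorem lemma_three_cos (m n r : ℕ) (hr : 1 ≤ r) (hmn : n ≤ m) (a : ℕ → ℂ) (t : ℝ)
    (ht : ∀ l : ℤ, t ≠ 2 * (l : ℝ) * π / (r : ℝ)) :
    ∑ k ∈ Finset.Icc n m, a k * ((Real.cos ((k : ℝ) * t) : ℝ) : ℂ)
      = ∑ k ∈ Finset.Icc n m, (a k - a (k + r)) * ((Dker k (r : ℤ) t : ℝ) : ℂ)
        - ∑ k ∈ Finset.Icc (m + 1) (m + r), a k * ((Dker k (-(r : ℤ)) t : ℝ) : ℂ)
        + ∑ k ∈ Finset.Icc n (n + r - 1), a k * ((Dker k (-(r : ℤ)) t : ℝ) : ℂ) := by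
  have hsin : Real.sin ((r : ℝ) * t / 2) ≠ 0 :=
    Real.sin_mul_div_two_ne_zero (by positivity) ht
  set f : ℕ → ℂ := fun k => a k * ((Dker k (-(r : ℤ)) t : ℝ) : ℂ)
  have hterm : ∀ k, a k * ((Real.cos ((k : ℝ) * t) : ℝ) : ℂ)
      = (a k - a (k + r)) * ((Dker k (r : ℤ) t : ℝ) : ℂ) + (f k - f (k + r)) := by
    intro k
    simp only [f, ← Dker_add_Dker_neg k r hsin, Dker_add_neg]
    push_cast
    ring
  have hlast : n + r - 1 + 1 = n + r := by omega
  simp only [hterm, sum_add_distrib, ← Ico_add_one_right_eq_Icc, hlast]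
  rw [sum_Ico_sub_shift f (by omega : n ≤ m + 1) r, Nat.add_right_comm m 1 r]
  ring
end
end

section
/- Let r ∈ ℕ, let n be fixed, and let (a_{n,k})_{k≥0} be nonnegative real numbers with lim_{k→∞} a_{n,k} = 0 and ∑_{k=0}^∞ a_{n,k} = 1. If t ∈ ℝ satisfies t ≠ 2lπ/r for every integer l, then |∑_{k=0}^∞ a_{n,k} D°_{k,1}(t)| ≤ (1/(2|sin(t/2) sin(rt/2)|)) (A_{n,r} + ∑_{k=0}^{r−1} a_{n,k}) ≤ A_{n,r}/|sin(t/2) sin(rt/2)|, where A_{n,r} = ∑_{k=0}^∞ |a_{n,k} − a_{n,k+r}|. -/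
open Real Filter

noncomputable section

/-!
Multiplying by `2 sin(rt/2)` turns `sin((2k+1)t/2)` into the `r`-step difference `C k - C (k + r)`
of `C k = cos((2k+1-r)t/2)`. Summation by parts with step `r` then bounds
`|2 sin(rt/2) ∑ aₖ sin((2k+1)t/2)|` by the boundary terms `∑_{k<r} aₖ` plus `A = ∑ |aₖ - aₖ₊ᵣ|`,
using only `|C k| ≤ 1`; and the boundary sum is itself the telescoping series `∑ (aₖ - aₖ₊ᵣ) ≤ A`.
-/

theorem summable_mul_of_abs_le_one {a C : ℕ → ℝ} (ha : Summable a) (hC : ∀ k, |C k| ≤ 1) :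
    Summable fun k => a k * C k :=
  ha.abs.of_norm_bounded fun k => by
    simpa [abs_mul] using mul_le_of_le_one_right (abs_nonneg (a k)) (hC k)

theorem tsum_mul_sub_shift {a C : ℕ → ℝ} (ha : Summable a) (hC : ∀ k, |C k| ≤ 1) (r : ℕ) :
    ∑' k, a k * (C k - C (k + r)) =
      ∑ k ∈ Finset.range r, a k * C k - ∑' k, (a k - a (k + r)) * C (k + r) := by
  have hC' : ∀ k, |C (k + r)| ≤ 1 := fun k => hC (k + r)
  have har : Summable fun k => a (k + r) := (summable_nat_add_iff r).2 ha
  simp only [mul_sub, sub_mul]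
  rw [(summable_mul_of_abs_le_one ha hC).tsum_sub (summable_mul_of_abs_le_one ha hC'),
    (summable_mul_of_abs_le_one ha hC').tsum_sub (summable_mul_of_abs_le_one har hC'),
    ← (summable_mul_of_abs_le_one ha hC).sum_add_tsum_nat_add r]
  ring

theorem abs_tsum_mul_sub_shift_le {a C : ℕ → ℝ} (ha : Summable a) (hC : ∀ k, |C k| ≤ 1)
    (r : ℕ) :
    |∑' k, a k * (C k - C (k + r))| ≤
      ∑ k ∈ Finset.range r, |a k| + ∑' k, |a k - a (k + r)| := by
  have had : Summable fun k => a k - a (k + r) := ha.sub ((summable_nat_add_iff r).2 ha)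
  rw [tsum_mul_sub_shift ha hC r]
  refine (abs_sub _ _).trans (add_le_add ?_ ?_)
  · refine (Finset.abs_sum_le_sum_abs _ _).trans (Finset.sum_le_sum fun k _ => ?_)
    rw [abs_mul]
    exact mul_le_of_le_one_right (abs_nonneg _) (hC k)
  · have hdC := summable_mul_of_abs_le_one had fun k => hC (k + r)
    refine (norm_tsum_le_tsum_norm hdC.norm).trans
      (Summable.tsum_le_tsum (fun k => ?_) hdC.norm had.abs)
    rw [Real.norm_eq_abs, abs_mul]
    exact mul_le_of_le_one_right (abs_nonneg _) (hC (k + r))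

theorem tsum_sub_shift {a : ℕ → ℝ} (ha : Summable a) (r : ℕ) :
    ∑' k, (a k - a (k + r)) = ∑ k ∈ Finset.range r, a k := by
  rw [ha.tsum_sub ((summable_nat_add_iff r).2 ha), ← ha.sum_add_tsum_nat_add r]
  ring

theorem sum_range_le_tsum_abs_sub_shift {a : ℕ → ℝ} (ha : Summable a) (r : ℕ) :
    ∑ k ∈ Finset.range r, a k ≤ ∑' k, |a k - a (k + r)| := by
  have had : Summable fun k => a k - a (k + r) := ha.sub ((summable_nat_add_iff r).2 ha)
  rw [← tsum_sub_shift ha r]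
  exact Summable.tsum_le_tsum (fun k => le_abs_self _) had had.abs

theorem two_mul_sin_mul_sin_odd_half (r k : ℕ) (t : ℝ) :
    2 * sin (r * t / 2) * sin ((2 * k + 1) * t / 2) =
      cos ((2 * k + 1 - r) * t / 2) - cos ((2 * ↑(k + r) + 1 - r) * t / 2) := by
  rw [two_mul_sin_mul_sin, ← cos_neg]
  push_cast
  ring_nf

theorem sin_mul_half_ne_zero {r : ℕ} (hr : r ≠ 0) {t : ℝ}
    (ht : ∀ l : ℤ, t ≠ 2 * (l : ℝ) * π / (r : ℝ)) : sin (r * t / 2) ≠ 0 := by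
  intro h
  obtain ⟨l, hl⟩ := sin_eq_zero_iff.mp h
  exact ht l (by field_simp; linarith)

theorem sin_half_ne_zero_of_sin_mul_half_ne_zero {r : ℕ} {t : ℝ} (h : sin (r * t / 2) ≠ 0) :
    sin (t / 2) ≠ 0 := by
  intro h1
  obtain ⟨l, hl⟩ := sin_eq_zero_iff.mp h1
  exact h (by rw [mul_div_assoc, ← hl, ← mul_assoc]; exact_mod_cast sin_int_mul_pi (r * l))

theorem abs_sin_mul_tsum_mul_sin_le {a : ℕ → ℝ} (ha : Summable a) (r : ℕ) (t : ℝ) :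
    |2 * sin (r * t / 2) * ∑' k : ℕ, a k * sin ((2 * k + 1) * t / 2)| ≤
      ∑ k ∈ Finset.range r, |a k| + ∑' k, |a k - a (k + r)| := by
  have hC : ∀ k : ℕ, |cos ((2 * k + 1 - r) * t / 2)| ≤ 1 := fun k => abs_cos_le_one _
  rw [← tsum_mul_left]
  refine le_of_eq_of_le (congrArg abs (tsum_congr fun k => ?_)) (abs_tsum_mul_sub_shift_le ha hC r)
  rw [← two_mul_sin_mul_sin_odd_half]
  ring

theorem lemma_four_general (r : ℕ) (hr : 1 ≤ r) (a : ℕ → ℝ) (ha0 : ∀ k, 0 ≤ a k)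
    (hasum : HasSum a 1) (t : ℝ)
    (ht : ∀ l : ℤ, t ≠ 2 * (l : ℝ) * π / (r : ℝ)) :
    |∑' k : ℕ, a k * Dker k 1 t|
        ≤ (1 / (2 * |Real.sin (t / 2) * Real.sin ((r : ℝ) * t / 2)|)) *
            ((∑' k : ℕ, |a k - a (k + r)|) + ∑ k ∈ Finset.range r, a k)
      ∧ (1 / (2 * |Real.sin (t / 2) * Real.sin ((r : ℝ) * t / 2)|)) *
            ((∑' k : ℕ, |a k - a (k + r)|) + ∑ k ∈ Finset.range r, a k)
          ≤ (∑' k : ℕ, |a k - a (k + r)|) /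
              |Real.sin (t / 2) * Real.sin ((r : ℝ) * t / 2)| := by
  have ha := hasum.summable
  have hsin_r := sin_mul_half_ne_zero (Nat.one_le_iff_ne_zero.1 hr) ht
  have hx := abs_pos.2 (sin_half_ne_zero_of_sin_mul_half_ne_zero hsin_r)
  have hy := abs_pos.2 hsin_r
  set A := ∑' k : ℕ, |a k - a (k + r)|
  set B := ∑ k ∈ Finset.range r, a k
  have hB : 0 ≤ B := Finset.sum_nonneg fun k _ => ha0 k
  have hBA : B ≤ A := sum_range_le_tsum_abs_sub_shift ha r
  have hsin : 2 * |sin (r * t / 2)| * |∑' k : ℕ, a k * sin ((2 * k + 1) * t / 2)| ≤ B + A := by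
    simpa only [abs_mul, abs_two, abs_of_nonneg (ha0 _)] using abs_sin_mul_tsum_mul_sin_le ha r t
  have hD : ∑' k : ℕ, a k * Dker k 1 t =
      (∑' k : ℕ, a k * sin ((2 * k + 1) * t / 2)) / (2 * sin (t / 2)) := by
    rw [← tsum_div_const]
    simp [Dker, mul_div_assoc]
  rw [hD, abs_div, abs_mul, abs_two, abs_mul]
  set S := |∑' k : ℕ, a k * sin ((2 * k + 1) * t / 2)|
  set x := |sin (t / 2)|
  set y := |sin (r * t / 2)|
  have hxy : 0 < x * y := mul_pos hx hy
  constructor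
  · calc S / (2 * x) ≤ (B + A) / (2 * y) / (2 * x) := by
          gcongr
          rw [le_div_iff₀ (by positivity)]
          linarith
      -- summation by parts even gives the constant `1 / 4`
      _ = 1 / (2 * (x * y)) * (A + B) / 2 := by field_simp; ring
      _ ≤ 1 / (2 * (x * y)) * (A + B) := half_le_self (by positivity)
  · rw [one_div_mul_eq_div, div_le_div_iff₀ (by positivity) hxy]
    nlinarith

/-- **Lemma 4.** Bound on the `A`-transform of the Dirichlet kernels by
`r`-differences of the entries. -/
theorem lemma_four (r : ℕ) (hr : 1 ≤ r) (a : ℕ → ℝ) (ha0 : ∀ k, 0 ≤ a k)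
    (halim : Tendsto a atTop (nhds 0)) (hasum : HasSum a 1) (t : ℝ)
    (ht : ∀ l : ℤ, t ≠ 2 * (l : ℝ) * π / (r : ℝ)) :
    |∑' k : ℕ, a k * Dker k 1 t|
        ≤ (1 / (2 * |Real.sin (t / 2) * Real.sin ((r : ℝ) * t / 2)|)) *
            ((∑' k : ℕ, |a k - a (k + r)|) + ∑ k ∈ Finset.range r, a k)
      ∧ (1 / (2 * |Real.sin (t / 2) * Real.sin ((r : ℝ) * t / 2)|)) *
            ((∑' k : ℕ, |a k - a (k + r)|) + ∑ k ∈ Finset.range r, a k)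
          ≤ (∑' k : ℕ, |a k - a (k + r)|) /
              |Real.sin (t / 2) * Real.sin ((r : ℝ) * t / 2)| :=
  lemma_four_general r hr a ha0 hasum t ht
end
end
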